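/- Let U be an infinite set with card U = τ, let V be a valuation ring with value group Γ satisfying card Γ ≤ τ, and let λ be a limit ordinal with card λ ≤ τ. Let 𝒰 be an ultrafilter on U such that every system of polynomial equations of cardinality ≤ τ with coefficients in Ṽ = Π_𝒰 V has a solution in Ṽ whenever all its finite subsystems do, and let V̄ = Ṽ/∩_{z∈V,z≠0} z·Ṽ be the separation of the ultrapower. Then every pseudo convergent sequence v̄ = (v̄_i)_{i<λ} of elements of V has a pseudo limit in V̄. -/

import Mathlib

/-!
Common definitions for formalizing "Immediate extensions of valuation rings
and ultrapowers" (D. Popescu).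

In a valuation ring (or any commutative ring, via divisibility) we encode the
comparison of values: `val a < val b` iff `a ∣ b` and `¬ b ∣ a`, and
`val a = val b` iff `a ∣ b ∧ b ∣ a`.
-/

universe u v

open Filter

/-- `val a < val b`, expressed via divisibility. -/
def ValLT {R : Type*} [CommRing R] (a b : R) : Prop := a ∣ b ∧ ¬ b ∣ a

/-- `val a = val b`, expressed via divisibility. -/
def ValEq {R : Type*} [CommRing R] (a b : R) : Prop := a ∣ b ∧ b ∣ a

/-- A sequence indexed by the ordinals `< lam` is pseudo convergent if
`val (v i - v i') < val (v i' - v i'')` for all `i < i' < i''`. -/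
def IsPseudoConvergent {R : Type*} [CommRing R] {lam : Ordinal.{v}}
    (seq : Set.Iio lam → R) : Prop :=
  ∀ i i' i'' : Set.Iio lam, i < i' → i' < i'' →
    ValLT (seq i - seq i') (seq i' - seq i'')

/-- `z` is a pseudo limit of the sequence `seq` if
`val (z - v i) < val (z - v i')` for all `i < i'`. -/
def IsPseudoLimit {R : Type*} [CommRing R] {lam : Ordinal.{v}}
    (seq : Set.Iio lam → R) (z : R) : Prop :=
  ∀ i i' : Set.Iio lam, i < i' → ValLT (z - seq i) (z - seq i')

/-- A pseudo convergent sequence is algebraic if some polynomial `f`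
satisfies `val (f (v i)) < val (f (v i'))` for all large enough `i < i'`. -/
def IsAlgebraicSeq {R : Type*} [CommRing R] {lam : Ordinal.{v}}
    (seq : Set.Iio lam → R) : Prop :=
  ∃ f : Polynomial R, ∃ i₀ : Set.Iio lam, ∀ i i' : Set.Iio lam,
    i₀ ≤ i → i < i' →
      ValLT (Polynomial.eval (seq i) f) (Polynomial.eval (seq i') f)

/-- A pseudo convergent sequence is transcendental if every polynomial `f`
satisfies `val (f (v i)) = val (f (v i'))` for all large enough `i < i'`. -/
def IsTranscendentalSeq {R : Type*} [CommRing R] {lam : Ordinal.{v}}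
    (seq : Set.Iio lam → R) : Prop :=
  ∀ f : Polynomial R, ∃ i₀ : Set.Iio lam, ∀ i i' : Set.Iio lam,
    i₀ ≤ i → i < i' →
      ValEq (Polynomial.eval (seq i) f) (Polynomial.eval (seq i') f)

/-- A sequence is fundamental if for every `γ` in the value group (the positive
part being cofinal, `γ` is represented by a nonzero element `z` of the ring)
there exist `i < i'` with `val (v i - v i') > val z`. -/
def IsFundamentalSeq {R : Type*} [CommRing R] {lam : Ordinal.{v}}
    (seq : Set.Iio lam → R) : Prop :=
  ∀ z : R, z ≠ 0 → ∃ i i' : Set.Iio lam, i < i' ∧ ValLT z (seq i - seq i')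

/-- An extension of valuation rings `f : V →+* V'` is immediate if it is
injective and local and induces isomorphisms on value groups (equivalently,
as `f` is local and injective, the value group map is onto) and on residue
fields (equivalently, the residue map is onto). -/
structure IsImmediate {V V' : Type*} [CommRing V] [CommRing V'] (f : V →+* V') : Prop where
  injective : Function.Injective f
  isLocal : ∀ a : V, IsUnit (f a) → IsUnit a
  value_surj : ∀ x : V', ∃ a : V, ValEq (f a) x
  residue_surj : ∀ x : V', ∃ a : V, ¬ IsUnit (x - f a)

/-- A valuation ring is complete (with respect to the valuation topology) iff
every fundamental pseudo convergent sequence has a (pseudo) limit. -/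
def IsCompleteValRing (R : Type v) [CommRing R] : Prop :=
  ∀ lam : Ordinal.{v}, Order.IsSuccLimit lam → ∀ seq : Set.Iio lam → R,
    IsPseudoConvergent seq → IsFundamentalSeq seq → ∃ z : R, IsPseudoLimit seq z

/-- `h : V →+* Vh` presents `Vh` as the completion of `V` (with respect to the
valuation topology): it is an immediate extension, `Vh` is complete, and `V`
is dense in `Vh`. -/
structure IsValuationCompletion {V : Type*} {Vh : Type v} [CommRing V] [CommRing Vh]
    (h : V →+* Vh) : Prop where
  immediate : IsImmediate h
  complete : IsCompleteValRing Vh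
  dense : ∀ x : Vh, ∀ z : V, z ≠ 0 → ∃ a : V, ValLT (h z) (x - h a)

/-- A field extension `g : K →+* L` is separable iff `M ⊗[K] L` is reduced for
every field extension `M` of `K` (MacLane's criterion). -/
def IsSeparableFieldHom {K L : Type u} [Field K] [Field L] (g : K →+* L) : Prop :=
  ∀ (M : Type u) [Field M] (φ : K →+* M),
    letI : Algebra K L := g.toAlgebra
    letI : Algebra K M := φ.toAlgebra
    IsReduced (TensorProduct K M L)

/-- An injective extension of domains is separable if the induced extension of
fraction fields is separable. -/
def IsSeparableDomainExt {A B : Type u} [CommRing A] [IsDomain A] [CommRing B] [IsDomain B]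
    (f : A →+* B) : Prop :=
  ∃ g : FractionRing A →+* FractionRing B,
    (∀ a : A, g (algebraMap A (FractionRing A) a) = algebraMap B (FractionRing B) (f a)) ∧
    IsSeparableFieldHom g

/-- The ultrapower `Ṽ = Π_𝒰 V` of `V` with respect to the ultrafilter `𝒰` on `U`. -/
abbrev Ultrapower (U : Type u) (𝒰 : Ultrafilter U) (V : Type u) : Type u :=
  Filter.Germ (𝒰 : Filter U) V

/-- The canonical (diagonal) embedding `V → Ṽ`. -/
noncomputable def germConstHom (U : Type u) (𝒰 : Ultrafilter U) (V : Type u) [CommRing V] :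
    V →+* Ultrapower U 𝒰 V :=
  (Filter.Germ.coeRingHom (𝒰 : Filter U)).comp (Pi.constRingHom U V)

/-- The ideal `q = ⋂_{z ∈ V, z ≠ 0} z Ṽ` of the ultrapower. -/
noncomputable def sepIdeal (U : Type u) (𝒰 : Ultrafilter U) (V : Type u) [CommRing V] :
    Ideal (Ultrapower U 𝒰 V) :=
  ⨅ z : {z : V // z ≠ 0}, Ideal.span {germConstHom U 𝒰 V z.1}

/-- The separation `V̄ = Ṽ / q` of the ultrapower. -/
abbrev SepUltrapower (U : Type u) (𝒰 : Ultrafilter U) (V : Type u) [CommRing V] : Type u :=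
  Ultrapower U 𝒰 V ⧸ sepIdeal U 𝒰 V

/-- The canonical map `V → V̄`. -/
noncomputable def barConstHom (U : Type u) (𝒰 : Ultrafilter U) (V : Type u) [CommRing V] :
    V →+* SepUltrapower U 𝒰 V :=
  (Ideal.Quotient.mk (sepIdeal U 𝒰 V)).comp (germConstHom U 𝒰 V)

/-- `𝒰` is such that any system of polynomial equations of cardinality
`≤ card U` with coefficients in the ultrapower `Ṽ` has a solution in `Ṽ`
whenever every finite subsystem has one. -/
def SaturatedUltrafilter (U : Type u) (𝒰 : Ultrafilter U) (V : Type u) [CommRing V] : Prop :=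
  ∀ (I J : Type u) (g : I → MvPolynomial J (Ultrapower U 𝒰 V)),
    Cardinal.mk I ≤ Cardinal.mk U →
    (∀ s : Finset I, ∃ x : J → Ultrapower U 𝒰 V, ∀ i ∈ s, MvPolynomial.eval x (g i) = 0) →
    ∃ x : J → Ultrapower U 𝒰 V, ∀ i : I, MvPolynomial.eval x (g i) = 0

/-- A factorization of `w : B →+* V'` through a smooth `V`-algebra `C`. -/
structure SmoothFactorization (V B V' : Type u) [CommRing V] [CommRing B] [Algebra V B]
    [CommRing V'] (f : V →+* V') (w : B →+* V') : Type (u + 1) where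
  C : Type u
  [instCommRing : CommRing C]
  [instAlgebra : Algebra V C]
  smooth : Algebra.Smooth V C
  p : B →+* C
  q : C →+* V'
  hp : p.comp (algebraMap V B) = algebraMap V C
  hq : q.comp (algebraMap V C) = f
  hqp : q.comp p = w

/-- `V'` is a filtered direct limit of smooth `V`-algebras: every `V`-morphism
from a finitely presented `V`-algebra to `V'` factors through a smooth
`V`-algebra (Lazard-style characterization of filtered colimits). -/
def IsFilteredColimitOfSmooth {V V' : Type u} [CommRing V] [CommRing V'] (f : V →+* V') : Prop :=
  ∀ (B : Type u) [CommRing B] [Algebra V B], Algebra.FinitePresentation V B →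
    ∀ w : B →+* V', w.comp (algebraMap V B) = f →
      Nonempty (SmoothFactorization V B V' f w)

/-!
By saturation of `𝒰` there is `z̃ ∈ Ṽ` with `v i - v (i+1) ∣ z̃ - v (i+1)` for all `i < λ`:
these are `card λ ≤ τ` polynomial equations, and finitely many of them are solved by `v m`
for `m` large. Divisibility stays total in `V̄`, and since the separating ideal lies in `b Ṽ`
for every `b ≠ 0`, strict divisibilities between elements of `V` survive in `V̄`, so `v` is
still pseudo convergent there. For `i < i'`, `z - v i'` is then divisible by
`v i' - v (i'+1)`, which is strictly more divisible than `v i - v i'`; hence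
`val (z - v i) = val (v i - v i') < val (z - v i')`.
-/

instance Filter.Germ.preValuationRing {α β : Type*} [Mul β] [PreValuationRing β]
    (φ : Ultrafilter α) : PreValuationRing ((φ : Filter α).Germ β) where
  cond' a b := by
    induction a using Filter.Germ.inductionOn with | h f =>
    induction b using Filter.Germ.inductionOn with | h g =>
    choose c hc using fun x => PreValuationRing.cond (f x) (g x)
    refine ⟨c, ?_⟩
    simp only [← Filter.Germ.coe_mul, Filter.Germ.coe_eq]
    exact Ultrafilter.eventually_or.mp (Eventually.of_forall hc)

instance Ideal.Quotient.preValuationRing {R : Type*} [CommRing R] [PreValuationRing R]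
    (I : Ideal R) : PreValuationRing (R ⧸ I) :=
  Ideal.Quotient.mk_surjective.preValuationRing (Ideal.Quotient.mk I : R →ₙ* R ⧸ I)

section PseudoConvergent

variable {R : Type*} [CommRing R] {lam : Ordinal.{v}} {v : Set.Iio lam → R}

theorem IsPseudoConvergent.sub_ne_zero (hv : IsPseudoConvergent v)
    (hlam : Order.IsSuccLimit lam) {i i' : Set.Iio lam} (h : i < i') : v i - v i' ≠ 0 := by
  intro h0
  have hi' : i' < ⟨Order.succ (i' : Ordinal), hlam.succ_lt i'.2⟩ :=
    Subtype.coe_lt_coe.mp (Order.lt_succ _)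
  exact (hv i i' _ h hi').2 (h0 ▸ dvd_zero _)

theorem IsPseudoConvergent.sub_dvd_sub (hv : IsPseudoConvergent v) {i j m : Set.Iio lam}
    (hij : i < j) (hjm : j ≤ m) : v i - v j ∣ v m - v j := by
  rcases hjm.eq_or_lt with rfl | hjm
  · simp
  · exact neg_sub (v j) (v m) ▸ dvd_neg.mpr (hv i j m hij hjm).1

theorem IsPseudoConvergent.map {S : Type*} [CommRing S] (hv : IsPseudoConvergent v)
    (hlam : Order.IsSuccLimit lam) (f : R →+* S)
    (hf : ∀ {a b : R}, b ≠ 0 → f b ∣ f a → b ∣ a) :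
    IsPseudoConvergent fun i => f (v i) := by
  intro i i' i'' h h'
  obtain ⟨hdvd, hndvd⟩ := hv i i' i'' h h'
  simp only [ValLT, ← map_sub]
  exact ⟨map_dvd f hdvd, fun hf' => hndvd (hf (hv.sub_ne_zero hlam h') hf')⟩

theorem IsPseudoConvergent.isPseudoLimit_of_sub_dvd [PreValuationRing R]
    (hv : IsPseudoConvergent v) {z : R}
    (hz : ∀ i, ∃ j, i < j ∧ v i - v j ∣ z - v j) : IsPseudoLimit v z := by
  intro i i' hii'
  obtain ⟨i'', hi'i'', hstep⟩ := hz i'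
  have hd : v i' - v i'' ∣ z - v i' := by
    simpa only [sub_sub_sub_cancel_right] using dvd_sub hstep (dvd_refl _)
  have hnot : ¬ z - v i' ∣ z - v i := fun H =>
    (hv i i' i'' hii' hi'i'').2 <| by
      simpa only [sub_sub_sub_cancel_left] using dvd_sub hd (hd.trans H)
  exact ⟨(ValuationRing.dvd_total _ _).resolve_right hnot, hnot⟩

end PseudoConvergent

section Ultrapower

variable {U : Type u} {𝒰 : Ultrafilter U} {V : Type u} [CommRing V]

theorem germConstHom_dvd_germConstHom_iff {a b : V} :
    germConstHom U 𝒰 V b ∣ germConstHom U 𝒰 V a ↔ b ∣ a := by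
  refine ⟨fun ⟨c, hc⟩ => ?_, map_dvd _⟩
  induction c using Filter.Germ.inductionOn with | h g =>
  obtain ⟨x, hx⟩ := (Filter.Germ.coe_eq.mp hc).exists
  exact ⟨g x, hx⟩

-- `sepIdeal ⊆ b Ṽ` as soon as `b ≠ 0`.
theorem barConstHom_dvd_barConstHom_iff {a b : V} (hb : b ≠ 0) :
    barConstHom U 𝒰 V b ∣ barConstHom U 𝒰 V a ↔ b ∣ a := by
  refine ⟨fun ⟨c, hc⟩ => ?_, map_dvd _⟩
  obtain ⟨t, rfl⟩ := Ideal.Quotient.mk_surjective c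
  have hmem : germConstHom U 𝒰 V a - germConstHom U 𝒰 V b * t ∈ sepIdeal U 𝒰 V :=
    Ideal.Quotient.eq.mp (by rw [map_mul]; exact hc)
  have hspan := (iInf_le (fun z : {z : V // z ≠ 0} => Ideal.span {germConstHom U 𝒰 V z.1})
    ⟨b, hb⟩) hmem
  rw [Ideal.mem_span_singleton] at hspan
  exact germConstHom_dvd_germConstHom_iff.mp <| (dvd_sub_left (dvd_mul_right _ t)).mp hspan

theorem SaturatedUltrafilter.exists_forall_dvd_sub {ι : Type v}
    (hsat : SaturatedUltrafilter U 𝒰 V)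
    (hι : Cardinal.lift.{u} (Cardinal.mk ι) ≤ Cardinal.lift.{v} (Cardinal.mk U))
    (d c : ι → Ultrapower U 𝒰 V) (hfin : ∀ s : Finset ι, ∃ x, ∀ j ∈ s, d j ∣ x - c j) :
    ∃ x, ∀ j, d j ∣ x - c j := by
  classical
  rcases isEmpty_or_nonempty ι with hι' | hι'
  · exact ⟨0, isEmptyElim⟩
  obtain ⟨emb⟩ := Cardinal.lift_mk_le'.mp hι
  set σ := Function.invFun emb
  have hσ : Function.Surjective σ := Function.invFun_surjective emb.injective
  -- the unknown `X none` is `x`; the unknown `X (some u)` is the quotient `(x - c j) / d j`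
  let eqn (u : U) : MvPolynomial (Option U) (Ultrapower U 𝒰 V) :=
    .X none - .C (c (σ u)) - .C (d (σ u)) * .X (some u)
  have heval (y : Option U → Ultrapower U 𝒰 V) (u : U) :
      MvPolynomial.eval y (eqn u) = y none - c (σ u) - d (σ u) * y (some u) := by
    simp [eqn]
  obtain ⟨y, hy⟩ := hsat U (Option U) eqn le_rfl fun s => by
    obtain ⟨x, hx⟩ := hfin (s.image σ)
    refine ⟨fun o => o.elim x fun u => if h : d (σ u) ∣ x - c (σ u) then h.choose else 0,
      fun u hu => ?_⟩
    have h := hx (σ u) (Finset.mem_image_of_mem σ hu)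
    rw [heval]
    simp only [Option.elim_none, Option.elim_some, dif_pos h]
    exact sub_eq_zero.mpr h.choose_spec
  refine ⟨y none, fun j => ?_⟩
  obtain ⟨u, rfl⟩ := hσ j
  exact ⟨y (some u), by linear_combination (heval y u).symm.trans (hy u)⟩

end Ultrapower

theorem stmt_3_general (U : Type u)
    (V : Type u) [CommRing V] [IsDomain V] [ValuationRing V]
    (𝒰 : Ultrafilter U) (hsat : SaturatedUltrafilter U 𝒰 V)
    (lam : Ordinal.{u}) (hlam : Order.IsSuccLimit lam) (hcard : lam.card ≤ Cardinal.mk U)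
    (v : Set.Iio lam → V) (hv : IsPseudoConvergent v) :
    ∃ z : SepUltrapower U 𝒰 V,
      IsPseudoLimit (fun i => barConstHom U 𝒰 V (v i)) z := by
  have : Nonempty (Set.Iio lam) := ⟨⟨0, hlam.bot_lt⟩⟩
  choose nxt hnxt using fun i : Set.Iio lam =>
    (⟨⟨Order.succ i, hlam.succ_lt i.2⟩, Subtype.coe_lt_coe.mp (Order.lt_succ _)⟩ :
      ∃ j, i < j)
  have hι : Cardinal.lift.{u} (Cardinal.mk (Set.Iio lam)) ≤
      Cardinal.lift.{u + 1} (Cardinal.mk U) := by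
    rw [Cardinal.mk_Iio_ordinal, Cardinal.lift_lift]
    exact Cardinal.lift_le.mpr hcard
  obtain ⟨z, hz⟩ := hsat.exists_forall_dvd_sub hι
    (fun i => germConstHom U 𝒰 V (v i - v (nxt i))) (fun i => germConstHom U 𝒰 V (v (nxt i)))
    fun s => by
      obtain ⟨m, hm⟩ := (s.image nxt).exists_le
      refine ⟨germConstHom U 𝒰 V (v m), fun i hi => ?_⟩
      have hdvd := hv.sub_dvd_sub (hnxt i) (hm _ (Finset.mem_image_of_mem nxt hi))
      simpa only [map_sub] using map_dvd (germConstHom U 𝒰 V) hdvd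
  have hbar := hv.map hlam (barConstHom U 𝒰 V) fun hb => (barConstHom_dvd_barConstHom_iff hb).mp
  refine ⟨Ideal.Quotient.mk _ z, hbar.isPseudoLimit_of_sub_dvd fun i => ⟨nxt i, hnxt i, ?_⟩⟩
  have hzi := map_dvd (Ideal.Quotient.mk (sepIdeal U 𝒰 V)) (hz i)
  simp only [map_sub] at hzi
  exact hzi

/-- With `card Γ ≤ τ = card U`, `𝒰` an ultrafilter on `U` such
that `τ`-sized polynomial systems over `Ṽ` are solvable whenever finitely
solvable, and `lam` a limit ordinal with `card lam ≤ τ`, every pseudo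
convergent sequence of elements of `V` indexed by `lam` has a pseudo limit in
the separation `V̄` of the ultrapower. -/
theorem stmt_3 (U : Type u) [Infinite U]
    (V : Type u) [CommRing V] [IsDomain V] [ValuationRing V]
    (hΓ : Cardinal.mk (ValuationRing.ValueGroup V (FractionRing V)) ≤ Cardinal.mk U)
    (𝒰 : Ultrafilter U) (hsat : SaturatedUltrafilter U 𝒰 V)
    (lam : Ordinal.{u}) (hlam : Order.IsSuccLimit lam) (hcard : lam.card ≤ Cardinal.mk U)
    (v : Set.Iio lam → V) (hv : IsPseudoConvergent v) :
    ∃ z : SepUltrapower U 𝒰 V,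
      IsPseudoLimit (fun i => barConstHom U 𝒰 V (v i)) z :=
  stmt_3_general U V 𝒰 hsat lam hlam hcard v hv
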